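/- arXiv:2004.13643 — 5 statements merged into one kernel-verified Lean document; each statement's English description precedes it below -/
import Mathlib

section
/- Let M be a set-homogeneous first-order structure. Then M is uniformly homogeneous (i.e., there is a functorial extension operator K from isomorphisms between finitely generated substructures of M to Aut(M) with K(id_A) = id_M, K(f) extending f, and K(f ∘ g) = K(f) ∘ K(g)) if and only if for every finitely generated substructure A of M there exists a group homomorphism E_A : Aut(A) → Aut(M) such that E_A(h) extends h for every h ∈ Aut(A). -/
open FirstOrder Language

namespace SetHomAux

variable {L : Language} {M : Type*} [L.Structure M]

/-- Restriction of an automorphism of `M` to an isomorphism between substructures. -/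
noncomputable def restrict (σ : M ≃[L] M) (A B : L.Substructure M)
    (h : σ '' (A : Set M) = (B : Set M)) : ↥A ≃[L] ↥B :=
  have h' : A.map σ.toEmbedding.toHom = B := SetLike.ext' (by simpa using h)
  h' ▸ σ.toEmbedding.substructureEquivMap A

lemma restrict_apply (σ : M ≃[L] M) (A B : L.Substructure M)
    (h : σ '' (A : Set M) = (B : Set M)) (a : ↥A) :
    (restrict σ A B h a : M) = σ a := by
  have h' : A.map σ.toEmbedding.toHom = B := SetLike.ext' (by simpa using h)
  revert h
  subst h'
  intro h
  exact σ.toEmbedding.substructureEquivMap_apply A a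

lemma restrict_symm_apply (σ : M ≃[L] M) (A B : L.Substructure M)
    (h : σ '' (A : Set M) = (B : Set M)) (b : ↥B) :
    σ ((restrict σ A B h).symm b : M) = (b : M) := by
  conv_rhs => rw [← (restrict σ A B h).apply_symm_apply b]
  rw [restrict_apply]

/-- The isomorphism setoid on substructures. -/
def isoSetoid (L : Language) (M : Type*) [L.Structure M] : Setoid (L.Substructure M) :=
  ⟨fun A B => Nonempty (↥A ≃[L] ↥B),
    ⟨fun A => ⟨Language.Equiv.refl L ↥A⟩, fun ⟨e⟩ => ⟨e.symm⟩, fun ⟨e⟩ ⟨f⟩ => ⟨f.comp e⟩⟩⟩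

/-- A representative of the isomorphism class of a substructure. -/
noncomputable def rep (A : L.Substructure M) : L.Substructure M :=
  (Quotient.mk (isoSetoid L M) A).out

lemma rep_iso (A : L.Substructure M) : Nonempty (↥(rep A) ≃[L] ↥A) :=
  Quotient.mk_out (s := isoSetoid L M) A

lemma rep_eq_of_iso {A B : L.Substructure M} (e : ↥A ≃[L] ↥B) : rep A = rep B := by
  unfold rep
  rw [Quotient.sound (s := isoSetoid L M) ⟨e⟩]

lemma rep_fg {A : L.Substructure M} (hA : A.FG) : (rep A).FG := by
  rw [Substructure.fg_iff_structure_fg] at hA ⊢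
  exact ((rep_iso A).some.fg_iff).mpr hA
variable {L : Language} {M : Type*} [L.Structure M]

/-- The generalized uniform extension operator. -/
noncomputable def Kgen (E : ∀ D : L.Substructure M, D.FG → (↥D ≃[L] ↥D) → (M ≃[L] M))
    (σA σB : M ≃[L] M) {A B D : L.Substructure M} (hD : D.FG)
    (hDA : σA '' (D : Set M) = (A : Set M)) (hDB : σB '' (D : Set M) = (B : Set M))
    (f : ↥A ≃[L] ↥B) : M ≃[L] M :=
  σB.comp ((E D hD ((restrict σB D B hDB).symm.comp
    (f.comp (restrict σA D A hDA)))).comp σA.symm)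

lemma Kgen_congr (E : ∀ D : L.Substructure M, D.FG → (↥D ≃[L] ↥D) → (M ≃[L] M))
    (σA σB : M ≃[L] M) {A B D D' : L.Substructure M} (h : D = D')
    (hD : D.FG) (hD' : D'.FG)
    (hDA : σA '' (D : Set M) = (A : Set M)) (hDA' : σA '' (D' : Set M) = (A : Set M))
    (hDB : σB '' (D : Set M) = (B : Set M)) (hDB' : σB '' (D' : Set M) = (B : Set M))
    (f : ↥A ≃[L] ↥B) :
    Kgen E σA σB hD hDA hDB f = Kgen E σA σB hD' hDA' hDB' f := by
  subst h; rfl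

lemma Kgen_extends (E : ∀ D : L.Substructure M, D.FG → (↥D ≃[L] ↥D) → (M ≃[L] M))
    (hE : ∀ (D : L.Substructure M) (hD : D.FG) (h : ↥D ≃[L] ↥D) (d : ↥D),
      E D hD h (d : M) = (h d : M))
    (σA σB : M ≃[L] M) {A B D : L.Substructure M} (hD : D.FG)
    (hDA : σA '' (D : Set M) = (A : Set M)) (hDB : σB '' (D : Set M) = (B : Set M))
    (f : ↥A ≃[L] ↥B) (a : ↥A) :
    Kgen E σA σB hD hDA hDB f (a : M) = (f a : M) := by
  have hd : σA.symm (a : M) ∈ D := by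
    obtain ⟨d, hd, hda⟩ : (a : M) ∈ σA '' (D : Set M) := hDA ▸ a.2
    rwa [← hda, σA.symm_apply_apply]
  have key := hE D hD ((restrict σB D B hDB).symm.comp (f.comp (restrict σA D A hDA)))
    ⟨σA.symm (a : M), hd⟩
  simp only [Kgen, Language.Equiv.comp_apply]
  rw [key, Language.Equiv.comp_apply, Language.Equiv.comp_apply]
  have hτ : restrict σA D A hDA ⟨σA.symm (a : M), hd⟩ = a := by
    apply Subtype.ext
    rw [restrict_apply]
    exact σA.apply_symm_apply _
  rw [hτ, restrict_symm_apply]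

lemma Kgen_id (E : ∀ D : L.Substructure M, D.FG → (↥D ≃[L] ↥D) → (M ≃[L] M))
    (hE1 : ∀ (D : L.Substructure M) (hD : D.FG),
      E D hD (Language.Equiv.refl L ↥D) = Language.Equiv.refl L M)
    (σA : M ≃[L] M) {A D : L.Substructure M} (hD : D.FG)
    (hDA hDA' : σA '' (D : Set M) = (A : Set M)) :
    Kgen E σA σA hD hDA hDA' (Language.Equiv.refl L ↥A) = Language.Equiv.refl L M := by
  have hinner : (restrict σA D A hDA').symm.comp
      ((Language.Equiv.refl L ↥A).comp (restrict σA D A hDA)) = Language.Equiv.refl L ↥D := by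
    apply Language.Equiv.ext; intro d
    simp only [Language.Equiv.comp_apply, Language.Equiv.refl_apply]
    exact (restrict σA D A hDA').symm_apply_apply d
  rw [Kgen, hinner, hE1]
  apply Language.Equiv.ext; intro x
  simp only [Language.Equiv.comp_apply, Language.Equiv.refl_apply]
  exact σA.apply_symm_apply x

lemma Kgen_comp (E : ∀ D : L.Substructure M, D.FG → (↥D ≃[L] ↥D) → (M ≃[L] M))
    (hE2 : ∀ (D : L.Substructure M) (hD : D.FG) (g h : ↥D ≃[L] ↥D),
      E D hD (g.comp h) = (E D hD g).comp (E D hD h))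
    (σA σB σC : M ≃[L] M) {A B C D : L.Substructure M} (hD : D.FG)
    (hDA : σA '' (D : Set M) = (A : Set M)) (hDB : σB '' (D : Set M) = (B : Set M))
    (hDC : σC '' (D : Set M) = (C : Set M))
    (f : ↥A ≃[L] ↥B) (g : ↥C ≃[L] ↥A) :
    Kgen E σC σB hD hDC hDB (f.comp g) =
      (Kgen E σA σB hD hDA hDB f).comp (Kgen E σC σA hD hDC hDA g) := by
  have hinner : (restrict σB D B hDB).symm.comp ((f.comp g).comp (restrict σC D C hDC)) =
      ((restrict σB D B hDB).symm.comp (f.comp (restrict σA D A hDA))).comp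
      ((restrict σA D A hDA).symm.comp (g.comp (restrict σC D C hDC))) := by
    apply Language.Equiv.ext; intro d
    simp only [Language.Equiv.comp_apply]
    rw [(restrict σA D A hDA).apply_symm_apply]
  simp only [Kgen]
  rw [hinner, hE2]
  apply Language.Equiv.ext; intro x
  simp only [Language.Equiv.comp_apply]
  rw [σA.symm_apply_apply]

end SetHomAux

/-- `M` is set-homogeneous: for any two isomorphic finitely generated substructures `A`, `B`
there is an automorphism of `M` mapping `A` onto `B`. -/
def IsSetHomogeneous (L : Language) (M : Type*) [L.Structure M] : Prop :=
  ∀ A B : L.Substructure M, A.FG → B.FG → (↥A ≃[L] ↥B) →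
    ∃ σ : M ≃[L] M, σ '' (A : Set M) = (B : Set M)

/-- `M` is uniformly homogeneous: there is a functorial extension operator from isomorphisms
between finitely generated substructures of `M` to automorphisms of `M`. -/
def IsUniformlyHomogeneous (L : Language) (M : Type*) [L.Structure M] : Prop :=
  ∃ K : ∀ A B : L.Substructure M, A.FG → B.FG → (↥A ≃[L] ↥B) → (M ≃[L] M),
    (∀ (A : L.Substructure M) (hA : A.FG), K A A hA hA (Language.Equiv.refl L ↥A) = Language.Equiv.refl L M) ∧
    (∀ (A B : L.Substructure M) (hA : A.FG) (hB : B.FG) (f : ↥A ≃[L] ↥B) (a : ↥A),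
      K A B hA hB f (a : M) = (f a : M)) ∧
    (∀ (A B C : L.Substructure M) (hA : A.FG) (hB : B.FG) (hC : C.FG) (f : ↥A ≃[L] ↥B) (g : ↥C ≃[L] ↥A),
      K C B hC hB (f.comp g) = (K A B hA hB f).comp (K C A hC hA g))

/-- A set-homogeneous structure is uniformly homogeneous iff for every finitely generated
substructure `A` there is a composition-preserving (i.e. group-homomorphic) extension operator
`E_A : Aut(A) → Aut(M)` such that `E_A h` extends `h`. -/
theorem setHomogeneous_uniformlyHomogeneous_iff (L : Language) (M : Type*) [L.Structure M]
    (hM : IsSetHomogeneous L M) :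
    IsUniformlyHomogeneous L M ↔
      ∀ A : L.Substructure M, A.FG →
        ∃ E : (↥A ≃[L] ↥A) → (M ≃[L] M),
          E (Language.Equiv.refl L ↥A) = Language.Equiv.refl L M ∧
          (∀ g h : ↥A ≃[L] ↥A, E (g.comp h) = (E g).comp (E h)) ∧
          (∀ h : ↥A ≃[L] ↥A, ∀ a : ↥A, E h (a : M) = (h a : M)) := by
  constructor
  · rintro ⟨K, hK1, hK2, hK3⟩ A hA
    exact ⟨K A A hA hA, hK1 A hA, fun g h => hK3 A A A hA hA hA g h,
      fun h a => hK2 A A hA hA h a⟩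
  · intro hext
    choose E hE1 hE2 hE3 using hext
    have hσex : ∀ (A : L.Substructure M), A.FG →
        ∃ σ : M ≃[L] M, σ '' ((SetHomAux.rep A : L.Substructure M) : Set M) = (A : Set M) :=
      fun A hA => hM _ A (SetHomAux.rep_fg hA) hA (SetHomAux.rep_iso A).some
    choose σ hσ using hσex
    have hσ' : ∀ (A B : L.Substructure M) (hB : B.FG), SetHomAux.rep A = SetHomAux.rep B →
        σ B hB '' ((SetHomAux.rep A : L.Substructure M) : Set M) = (B : Set M) := by
      intro A B hB h
      rw [h]; exact hσ B hB
    refine ⟨fun A B hA hB f => SetHomAux.Kgen E (σ A hA) (σ B hB) (SetHomAux.rep_fg hA)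
      (hσ A hA) (hσ' A B hB (SetHomAux.rep_eq_of_iso f)) f, ?_, ?_, ?_⟩
    · intro A hA
      exact SetHomAux.Kgen_id E hE1 (σ A hA) (SetHomAux.rep_fg hA) (hσ A hA) _
    · intro A B hA hB f a
      exact SetHomAux.Kgen_extends E hE3 (σ A hA) (σ B hB) (SetHomAux.rep_fg hA)
        (hσ A hA) _ f a
    · intro A B C hA hB hC f g
      have hCA : SetHomAux.rep C = SetHomAux.rep A := SetHomAux.rep_eq_of_iso g
      beta_reduce
      rw [SetHomAux.Kgen_congr E (σ A hA) (σ B hB) hCA.symm (SetHomAux.rep_fg hA)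
        (SetHomAux.rep_fg hC) (hσ A hA) (hσ' C A hA hCA)
        (hσ' A B hB (SetHomAux.rep_eq_of_iso f)) (hσ' C B hB ?hCB) f]
      · exact SetHomAux.Kgen_comp E hE2 (σ A hA) (σ B hB) (σ C hC) (SetHomAux.rep_fg hC)
          (hσ' C A hA hCA) (hσ' C B hB (hCA.trans (SetHomAux.rep_eq_of_iso f)))
          (hσ C hC) f g
      · exact hCA.trans (SetHomAux.rep_eq_of_iso f)
end

section
/- Let G be a group, A a subgroup (or more generally a substructure) of a finite structure U, and suppose there exists h ∈ Aut(U) with h ≠ id_U but h restricted to A equal to id_A. If K is a Katětov functor on the Fraïssé class of substructures of U (with U finite being the Fraïssé limit), and K(A) = K(U) = U with natural transformation η from the identity to K, then η_U ∘ h = η_U, and since η_U is an embedding, h = id_U, a contradiction. Hence no Katětov functor exists on such a class. -/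
open FirstOrder Language

/-- If `U` is a finite structure (the Fraïssé limit of its age), `A` a substructure of `U`
fixed pointwise by some automorphism `h ≠ id`, then there is no Katětov functor on the age
of `U`.  We formalize the data of a Katětov functor that is relevant here: its action `KA`
on embeddings `A ↪ U` and `KU` on embeddings `U ↪ U` (with values `K(A) = K(U) = U`),
functoriality, and the natural transformation `η` from the identity; the conclusion is
that no such data can exist, i.e. we derive `False`. -/
theorem no_katetov_functor_of_fixing_automorphism
    (L : Language) (U : Type*) [L.Structure U] [Finite U]
    (A : Type*) [L.Structure A]
    (i : A ↪[L] U) (h : U ≃[L] U) (hne : h ≠ Language.Equiv.refl L U)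
    (hfix : ∀ a : A, h (i a) = i a)
    -- the Katětov functor: action on morphisms, with K(A) = K(U) = U
    (KA : (A ↪[L] U) → (U ↪[L] U)) (KU : (U ↪[L] U) → (U ↪[L] U))
    -- functoriality on composable pairs
    (Kcomp : ∀ (f : A ↪[L] U) (g : U ↪[L] U), KA (g.comp f) = (KU g).comp (KA f))
    -- the natural transformation η from the identity functor to K
    (ηA : A ↪[L] U) (ηU : U ↪[L] U)
    (natA : ∀ f : A ↪[L] U, ηU.comp f = (KA f).comp ηA)
    (natU : ∀ g : U ↪[L] U, ηU.comp g = (KU g).comp ηU) :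
    False := by
  have e1 : h.toEmbedding.comp i = i := by
    ext a
    simp [hfix a]
  have e2 : KA i = (KU h.toEmbedding).comp (KA i) := by
    rw [← Kcomp, e1]
  have hs : Function.Surjective (KA i) :=
    Finite.injective_iff_surjective.mp (KA i).injective
  have hKU : ∀ u : U, KU h.toEmbedding u = u := by
    intro u
    obtain ⟨x, rfl⟩ := hs u
    exact (congrArg (fun f : U ↪[L] U => f x) e2).symm
  apply hne
  ext x
  have := congrArg (fun f : U ↪[L] U => f x) (natU h.toEmbedding)
  simp only [Embedding.comp_apply] at this
  rw [hKU] at this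
  exact ηU.injective this
end

section
/- For n ≥ 3, the Fraïssé class of all sets of cardinality at most n (in the empty language) admits no Katětov functor. -/
/-- A Katětov functor on the Fraïssé class `Ens(n)` of all sets of cardinality `≤ n`
(in the empty language).  W.l.o.g. the members of the class are the subsets of
`Fin n`; structures with age contained in the class are exactly the sets embeddable
into `Fin n`, and embeddings are injective maps. -/
structure KatetovEns (n : ℕ) where
  /-- the value `K(S)` of the functor at an object `S` -/
  obj : Set (Fin n) → Type
  /-- `K(S)` is countable -/
  countable : ∀ S, Countable (obj S)
  /-- the age of `K(S)` is contained in the class: `K(S)` embeds into an `n`-element set -/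
  small : ∀ S, Nonempty (obj S ↪ Fin n)
  /-- action of the functor on embeddings -/
  map : ∀ {S T : Set (Fin n)}, (↥S ↪ ↥T) → (obj S ↪ obj T)
  map_id : ∀ S : Set (Fin n), map (Function.Embedding.refl ↥S) = Function.Embedding.refl (obj S)
  map_comp : ∀ {S T R : Set (Fin n)} (f : ↥S ↪ ↥T) (g : ↥T ↪ ↥R),
    map (f.trans g) = (map f).trans (map g)
  /-- the natural transformation from the identity functor to `K` -/
  eta : ∀ S : Set (Fin n), ↥S ↪ obj S
  natural : ∀ {S T : Set (Fin n)} (f : ↥S ↪ ↥T) (x : ↥S), eta T (f x) = map f (eta S x)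
  /-- the Katětov property: every one-point extension `S ↪ S ∪ {x}` factors through
  `η_S` via an embedding `S ∪ {x} ↪ K(S)` -/
  extension : ∀ (S : Set (Fin n)) (x : Fin n), x ∉ S →
    ∃ g : ↥(insert x S) ↪ obj S,
      ∀ s : ↥S, g ⟨s, Set.mem_insert_of_mem x s.2⟩ = eta S s

/-- For `n ≥ 3`, the class of all sets of cardinality at most `n` admits no Katětov
functor. -/
theorem no_katetov_functor_Ens (n : ℕ) (hn : 3 ≤ n) : IsEmpty (KatetovEns n) := by
  constructor
  intro K
  obtain ⟨m, rfl⟩ : ∃ m, n = m + 3 := ⟨n - 3, by omega⟩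
  have h01 : (0 : Fin (m+3)) ≠ 1 := by simp [Fin.ext_iff]
  set T : Set (Fin (m+3)) := ({0, 1} : Set (Fin (m+3)))ᶜ with hT
  set F : Set (Fin (m+3)) := Set.univ with hF
  -- all values of the functor are finite, of cardinality at most m+3
  have hfin : ∀ S, Finite (K.obj S) := fun S =>
    (K.small S).elim fun f => Finite.of_injective f f.injective
  have hcard : ∀ S, Nat.card (K.obj S) ≤ m + 3 := by
    intro S
    obtain ⟨f⟩ := K.small S
    haveI := hfin S
    have h := Nat.card_le_card_of_injective f f.injective
    simpa using h
  -- the extension property at T gives a lower bound on the cardinality of K(T)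
  have h0T : (0 : Fin (m+3)) ∉ T := by simp [hT]
  obtain ⟨g, -⟩ := K.extension T 0 h0T
  have hins : (insert (0 : Fin (m+3)) T) = (({1} : Set (Fin (m+3)))ᶜ) := by
    ext a
    simp only [hT, Set.mem_insert_iff, Set.mem_compl_iff, Set.mem_singleton_iff,
      Set.mem_insert_iff, not_or]
    constructor
    · rintro (rfl | ⟨-, h⟩)
      · exact fun h => h01 h
      · exact h
    · intro h
      by_cases h0 : a = 0
      · exact Or.inl h0
      · exact Or.inr ⟨h0, h⟩
  have hcardT : m + 2 ≤ Nat.card (K.obj T) := by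
    haveI := hfin T
    have h1 : Nat.card ↥(insert (0 : Fin (m+3)) T) ≤ Nat.card (K.obj T) :=
      Nat.card_le_card_of_injective g g.injective
    have h2 : Nat.card ↥(insert (0:Fin (m+3)) T) = m + 2 := by
      rw [hins, Nat.card_coe_set_eq]
      have h3 := Set.ncard_add_ncard_compl ({1} : Set (Fin (m+3)))
      rw [Set.ncard_singleton] at h3
      simp only [Nat.card_eq_fintype_card, Fintype.card_fin] at h3
      omega
    omega
  -- the inclusion T ↪ F and the swap of 0 and 1 on F
  let j : ↥T ↪ ↥F := ⟨fun t => ⟨t.1, trivial⟩, by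
    intro a b h
    simp only [Subtype.mk.injEq] at h
    exact Subtype.ext (congrArg (fun x : ↥F => x.1) h)⟩
  let τ : Equiv.Perm (Fin (m+3)) := Equiv.swap 0 1
  let e : ↥F ↪ ↥F := ⟨fun a => ⟨τ a.1, trivial⟩, by
    intro a b h
    simp only [Subtype.mk.injEq] at h
    exact Subtype.ext (τ.injective (congrArg Subtype.val h))⟩
  have hje : j.trans e = j := by
    apply Function.Embedding.ext
    intro t
    have ht := t.2
    simp only [hT, Set.mem_compl_iff, Set.mem_insert_iff, Set.mem_singleton_iff,
      not_or] at ht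
    simp only [Function.Embedding.trans_apply, Function.Embedding.coeFn_mk, j, e, τ]
    exact Subtype.ext (Equiv.swap_apply_of_ne_of_ne ht.1 ht.2)
  -- K(e) fixes the image of K(T) pointwise
  have hfix : ∀ c : K.obj T, K.map e (K.map j c) = K.map j c := by
    intro c
    have h := K.map_comp j e
    rw [hje] at h
    exact (DFunLike.congr_fun h c).symm
  -- hence K(e) is the identity, since the image misses at most one point
  have hid : ∀ b : K.obj F, K.map e b = b := by
    by_contra hcon
    push_neg at hcon
    obtain ⟨b, hb⟩ := hcon
    haveI := hfin F
    haveI := hfin T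
    set A : Set (K.obj F) := Set.range (K.map j) with hA
    have hbA : b ∉ A := by
      rintro ⟨c, rfl⟩
      exact hb (hfix c)
    have hbA' : K.map e b ∉ A := by
      rintro ⟨c, hc⟩
      have h1 : K.map e (K.map e b) = K.map e b := by rw [← hc]; exact hfix c
      exact hb ((K.map e).injective h1)
    have hsub : ({b, K.map e b} : Set (K.obj F)) ⊆ Aᶜ := by
      rintro x (rfl | rfl)
      · exact hbA
      · exact hbA'
    have h2 : 2 ≤ Aᶜ.ncard := by
      have := Set.ncard_le_ncard hsub (Set.toFinite _)
      rwa [Set.ncard_pair (Ne.symm hb)] at this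
    have hAcard : Nat.card (K.obj T) = A.ncard := by
      rw [hA, ← Nat.card_coe_set_eq]
      exact (Nat.card_range_of_injective (K.map j).injective).symm
    have h3 := Set.ncard_add_ncard_compl A
    have h4 := hcard F
    omega
  -- contradiction with naturality and injectivity of eta
  have hnat := K.natural e ⟨0, trivial⟩
  rw [hid] at hnat
  have heq := (K.eta F).injective hnat
  have hval : τ (0 : Fin (m+3)) = 0 := congrArg Subtype.val heq
  rw [Equiv.swap_apply_left] at hval
  exact h01 hval.symm
end

section
/- For every n, the n-element set (as a structure in the empty language) is uniformly homogeneous: the assignment sending each bijection f : A → B between subsets of {0,...,n-1} to the permutation K(f) of {0,...,n-1} that extends f and maps the complement of A onto the complement of B in the unique strictly increasing way is a functor, i.e., K(id_A) = id, and K(g ∘ f) = K(g) ∘ K(f) for composable bijections f : A → B, g : B → C between subsets of {0,...,n-1}. -/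
variable {n : ℕ}

/-- The strictly increasing bijection between the complements of two finsets of
`Fin n` of equal cardinality. -/
noncomputable def incEquiv (A B : Finset (Fin n)) (h : Bᶜ.card = Aᶜ.card) :
    {x : Fin n // x ∉ A} ≃ {x : Fin n // x ∉ B} :=
  (Equiv.subtypeEquivRight (fun x => (Finset.mem_compl (a := x) (s := A)).symm)).trans
    (((Aᶜ.orderIsoOfFin rfl).symm.toEquiv.trans (Bᶜ.orderIsoOfFin h).toEquiv).trans
      (Equiv.subtypeEquivRight (fun x => Finset.mem_compl (a := x) (s := B))))

/-- `K f` : the permutation of `{0,…,n-1}` extending the bijection `f : A → B` which maps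
the complement of `A` onto the complement of `B` in the unique strictly increasing way. -/
noncomputable def Kperm (A B : Finset (Fin n)) (f : ↥A ≃ ↥B) : Equiv.Perm (Fin n) :=
  (Equiv.sumCompl (· ∈ A)).symm.trans
    ((Equiv.sumCongr f (incEquiv A B (by
      have hAB : A.card = B.card := by
        simpa [Fintype.card_coe] using Fintype.card_congr f
      rw [Finset.card_compl, Finset.card_compl, hAB]))).trans
      (Equiv.sumCompl (· ∈ B)))

lemma incEquiv_strictMono (A B : Finset (Fin n)) (h : Bᶜ.card = Aᶜ.card)
    {x y : {x : Fin n // x ∉ A}} (hxy : (x : Fin n) < y) :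
    ((incEquiv A B h x : Fin n)) < (incEquiv A B h y : Fin n) := by
  simp only [incEquiv, Equiv.trans_apply, Equiv.subtypeEquivRight_apply]
  apply (Bᶜ.orderIsoOfFin h).strictMono
  apply (Aᶜ.orderIsoOfFin rfl).symm.strictMono
  exact hxy

lemma Kperm_apply_mem (A B : Finset (Fin n)) (f : ↥A ≃ ↥B) (a : Fin n) (ha : a ∈ A) :
    Kperm A B f a = (f ⟨a, ha⟩ : Fin n) := by
  simp [Kperm, Equiv.sumCompl_symm_apply_of_pos (p := (· ∈ A)) ha]

lemma Kperm_apply_not_mem (A B : Finset (Fin n)) (f : ↥A ≃ ↥B) (a : Fin n) (ha : a ∉ A) :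
    Kperm A B f a = (incEquiv A B (by
      have hAB : A.card = B.card := by
        simpa [Fintype.card_coe] using Fintype.card_congr f
      rw [Finset.card_compl, Finset.card_compl, hAB]) ⟨a, ha⟩ : Fin n) := by
  simp [Kperm, Equiv.sumCompl_symm_apply_of_neg (p := (· ∈ A)) ha]

lemma Kperm_unique (A B : Finset (Fin n)) (f : ↥A ≃ ↥B) (σ : Equiv.Perm (Fin n))
    (h1 : ∀ a : ↥A, σ (a : Fin n) = (f a : Fin n))
    (h2 : ∀ x : Fin n, (hx : x ∉ A) → σ x ∉ B)
    (h3 : ∀ x y : Fin n, x ∉ A → y ∉ A → x < y → σ x < σ y) :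
    σ = Kperm A B f := by
  have hAB : A.card = B.card := by
    simpa [Fintype.card_coe] using Fintype.card_congr f
  have hc : Bᶜ.card = Aᶜ.card := by
    rw [Finset.card_compl, Finset.card_compl, hAB]
  -- the restriction of σ to the complements
  set e : {x : Fin n // x ∉ A} → {x : Fin n // x ∉ B} := fun x => ⟨σ x, h2 x x.2⟩ with he
  have hmono : StrictMono e := fun x y hxy => h3 x y x.2 y.2 hxy
  have hsurj : Function.Surjective e := by
    have hinj : Function.Injective e := hmono.injective
    have hcard : Fintype.card {x : Fin n // x ∉ A} = Fintype.card {x : Fin n // x ∉ B} := by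
      have h1' : Fintype.card {x : Fin n // x ∉ A} = Aᶜ.card := by
        rw [← Fintype.card_coe Aᶜ]
        exact Fintype.card_congr
          (Equiv.subtypeEquivRight (fun x => (Finset.mem_compl (a := x) (s := A)).symm))
      have h2' : Fintype.card {x : Fin n // x ∉ B} = Bᶜ.card := by
        rw [← Fintype.card_coe Bᶜ]
        exact Fintype.card_congr
          (Equiv.subtypeEquivRight (fun x => (Finset.mem_compl (a := x) (s := B)).symm))
      rw [h1', h2', hc]
    exact (Fintype.bijective_iff_injective_and_card e).2 ⟨hinj, hcard⟩ |>.2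
  set eiso : {x : Fin n // x ∉ A} ≃o {x : Fin n // x ∉ B} :=
    StrictMono.orderIsoOfSurjective e hmono hsurj with heiso
  have imono : StrictMono (incEquiv A B hc) := by
    intro x y hxy
    exact incEquiv_strictMono A B hc hxy
  set iiso : {x : Fin n // x ∉ A} ≃o {x : Fin n // x ∉ B} :=
    StrictMono.orderIsoOfSurjective _ imono (incEquiv A B hc).surjective with hiiso
  have key : eiso = iiso := Subsingleton.elim _ _
  ext x
  by_cases hx : x ∈ A
  · rw [h1 ⟨x, hx⟩, Kperm_apply_mem A B f x hx]
  · have h5 := congrArg (fun (j : {x : Fin n // x ∉ A} ≃o {x : Fin n // x ∉ B}) =>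
      ((j ⟨x, hx⟩ : {x : Fin n // x ∉ B}) : Fin n)) key
    have e1 : ((eiso ⟨x, hx⟩ : {x : Fin n // x ∉ B}) : Fin n) = σ x := by
      rw [StrictMono.coe_orderIsoOfSurjective (f := e)]
    have e2 : ((iiso ⟨x, hx⟩ : {x : Fin n // x ∉ B}) : Fin n)
        = ((incEquiv A B hc ⟨x, hx⟩ : {x : Fin n // x ∉ B}) : Fin n) := by
      rw [StrictMono.coe_orderIsoOfSurjective]
    rw [Kperm_apply_not_mem A B f x hx]
    rw [e1, e2] at h5
    exact congrArg Fin.val h5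

/-- The `n`-element set is uniformly homogeneous: the assignment `f ↦ K f` extends each
bijection `f : A ≃ B` between subsets of `Fin n`, is strictly increasing from the complement
of `A` onto the complement of `B`, and is a functor: `K (id_A) = id` and
`K (g ∘ f) = K g ∘ K f`. -/
theorem Kperm_functor :
    (∀ (A B : Finset (Fin n)) (f : ↥A ≃ ↥B) (a : ↥A), Kperm A B f (a : Fin n) = (f a : Fin n)) ∧
    (∀ (A B : Finset (Fin n)) (f : ↥A ≃ ↥B) (x : Fin n), x ∉ A → Kperm A B f x ∉ B) ∧
    (∀ (A B : Finset (Fin n)) (f : ↥A ≃ ↥B) (x y : Fin n),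
      x ∉ A → y ∉ A → x < y → Kperm A B f x < Kperm A B f y) ∧
    (∀ A : Finset (Fin n), Kperm A A (Equiv.refl ↥A) = Equiv.refl (Fin n)) ∧
    (∀ (A B C : Finset (Fin n)) (f : ↥A ≃ ↥B) (g : ↥B ≃ ↥C),
      Kperm A C (f.trans g) = (Kperm A B f).trans (Kperm B C g)) := by
  have P1 : ∀ (A B : Finset (Fin n)) (f : ↥A ≃ ↥B) (a : ↥A),
      Kperm A B f (a : Fin n) = (f a : Fin n) := by
    intro A B f a
    rw [Kperm_apply_mem A B f a a.2]
  have P2 : ∀ (A B : Finset (Fin n)) (f : ↥A ≃ ↥B) (x : Fin n), x ∉ A → Kperm A B f x ∉ B := by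
    intro A B f x hx
    rw [Kperm_apply_not_mem A B f x hx]
    exact (incEquiv A B _ ⟨x, hx⟩).2
  have P3 : ∀ (A B : Finset (Fin n)) (f : ↥A ≃ ↥B) (x y : Fin n),
      x ∉ A → y ∉ A → x < y → Kperm A B f x < Kperm A B f y := by
    intro A B f x y hx hy hxy
    rw [Kperm_apply_not_mem A B f x hx, Kperm_apply_not_mem A B f y hy]
    exact incEquiv_strictMono A B _ hxy
  refine ⟨P1, P2, P3, ?_, ?_⟩
  · intro A
    refine (Kperm_unique A A (Equiv.refl ↥A) (Equiv.refl (Fin n)) ?_ ?_ ?_).symm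
    · intro a; rfl
    · intro x hx; exact hx
    · intro x y _ _ hxy; exact hxy
  · intro A B C f g
    refine (Kperm_unique A C (f.trans g) ((Kperm A B f).trans (Kperm B C g)) ?_ ?_ ?_).symm
    · intro a
      simp only [Equiv.trans_apply]
      rw [P1 A B f a, P1 B C g (f a)]
    · intro x hx
      exact P2 B C g _ (P2 A B f x hx)
    · intro x y hx hy hxy
      exact P3 B C g _ _ (P2 A B f x hx) (P2 A B f y hy) (P3 A B f x y hx hy hxy)
end

section
/- The class of finite cyclic groups has the amalgamation property: for any embeddings f : Z_k → Z_m and g : Z_k → Z_n of finite cyclic groups, there exist embeddings f' : Z_m → Z_{mn} and g' : Z_n → Z_{mn} and an automorphism h of Z_{mn} such that h ∘ f' ∘ f = g' ∘ g. -/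
/-- In `ZMod N` (`N ≠ 0`), two elements of the same additive order differ by
multiplication by a unit. -/
lemma zmod_exists_unit_mul_eq {N : ℕ} (hN : N ≠ 0) (a b : ZMod N)
    (hab : addOrderOf a = addOrderOf b) : ∃ u : (ZMod N)ˣ, (u : ZMod N) * a = b := by
  haveI : NeZero N := ⟨hN⟩
  have ha : addOrderOf a = N / N.gcd a.val := by
    conv_lhs => rw [← ZMod.natCast_rightInverse a]
    exact ZMod.addOrderOf_coe a.val hN
  have hb : addOrderOf b = N / N.gcd b.val := by
    conv_lhs => rw [← ZMod.natCast_rightInverse b]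
    exact ZMod.addOrderOf_coe b.val hN
  set d := N.gcd a.val with hd_def
  have hd0 : 0 < d := Nat.gcd_pos_of_pos_left _ (Nat.pos_of_ne_zero hN)
  have hdN : d ∣ N := Nat.gcd_dvd_left N a.val
  have hbd0 : 0 < N.gcd b.val := Nat.gcd_pos_of_pos_left _ (Nat.pos_of_ne_zero hN)
  have hbdN : N.gcd b.val ∣ N := Nat.gcd_dvd_left N b.val
  -- from equal orders conclude equal gcds
  have hd : N.gcd b.val = d := by
    have h1 : N / d = N / N.gcd b.val := by rw [← ha, ← hb, hab]
    have h2 := congrArg (N / ·) h1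
    simpa [Nat.div_div_self hdN hN, Nat.div_div_self hbdN hN] using h2.symm
  set N' := N / d with hN'_def
  have hNd : d * N' = N := Nat.mul_div_cancel' hdN
  have hN'0 : 0 < N' := Nat.div_pos (Nat.le_of_dvd (Nat.pos_of_ne_zero hN) hdN) hd0
  haveI : NeZero N' := ⟨hN'0.ne'⟩
  have hA : Nat.Coprime (a.val / d) N' := (Nat.coprime_div_gcd_div_gcd hd0).symm
  have hB : Nat.Coprime (b.val / d) N' := by
    have h3 := (Nat.coprime_div_gcd_div_gcd hbd0).symm
    rwa [hd] at h3
  set uA := ZMod.unitOfCoprime _ hA with huA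
  set uB := ZMod.unitOfCoprime _ hB with huB
  have hdvd : N' ∣ N := Nat.div_dvd_of_dvd hdN
  obtain ⟨u, hu⟩ := ZMod.unitsMap_surjective hdvd (uB * uA⁻¹)
  refine ⟨u, ?_⟩
  -- the congruence mod N'
  have hucast : (((u : ZMod N).val : ZMod N')) = ((uB * uA⁻¹ : (ZMod N')ˣ) : ZMod N') := by
    have h4 : ((ZMod.unitsMap hdvd u : (ZMod N')ˣ) : ZMod N')
        = ((uB * uA⁻¹ : (ZMod N')ˣ) : ZMod N') := by rw [hu]
    rw [ZMod.unitsMap_def] at h4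
    simpa [ZMod.natCast_val] using h4
  have key : (u : ZMod N).val * (a.val / d) ≡ b.val / d [MOD N'] := by
    rw [← ZMod.natCast_eq_natCast_iff]
    push_cast
    rw [hucast]
    have hAc : ((a.val / d : ℕ) : ZMod N') = (uA : ZMod N') := by
      rw [huA, ZMod.coe_unitOfCoprime]
    have hBc : ((b.val / d : ℕ) : ZMod N') = (uB : ZMod N') := by
      rw [huB, ZMod.coe_unitOfCoprime]
    rw [hAc, hBc, ← Units.val_mul, inv_mul_cancel_right]
  -- scale the congruence by d
  have key2 : (u : ZMod N).val * a.val ≡ b.val [MOD N] := by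
    have h2 := Nat.ModEq.mul_left' (c := d) key
    rw [hNd] at h2
    have ha2 : d * ((u : ZMod N).val * (a.val / d)) = (u : ZMod N).val * a.val := by
      rw [mul_left_comm, Nat.mul_div_cancel' (Nat.gcd_dvd_right N a.val)]
    have hb2 : d * (b.val / d) = b.val := by
      rw [Nat.mul_div_cancel' (hd ▸ Nat.gcd_dvd_right N b.val)]
    rwa [ha2, hb2] at h2
  calc (u : ZMod N) * a = (((u : ZMod N).val * a.val : ℕ) : ZMod N) := by
        rw [Nat.cast_mul]
        congr 1 <;> simp [ZMod.natCast_val, ZMod.cast_id]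
    _ = ((b.val : ℕ) : ZMod N) := (ZMod.natCast_eq_natCast_iff _ _ _).mpr key2
    _ = b := ZMod.natCast_rightInverse b

/-- A hom out of `ZMod m` sending `1` to an element of order `m` is injective. -/
lemma zmod_hom_injective {m : ℕ} (hm : 0 < m) {G : Type*} [AddGroup G]
    (φ : ZMod m →+ G) (h : addOrderOf (φ 1) = m) : Function.Injective φ := by
  haveI : NeZero m := ⟨hm.ne'⟩
  rw [injective_iff_map_eq_zero]
  intro x hx
  have hx1 : x = x.val • (1 : ZMod m) := by
    rw [Nat.smul_one_eq_cast, ZMod.natCast_rightInverse x]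
  have hx' : x.val • φ 1 = 0 := by rw [← map_nsmul, ← hx1, hx]
  have hdvd : addOrderOf (φ 1) ∣ x.val := addOrderOf_dvd_of_nsmul_eq_zero hx'
  rw [h] at hdvd
  have hx0 : x.val = 0 := Nat.eq_zero_of_dvd_of_lt hdvd (ZMod.val_lt x)
  rw [hx1, hx0, zero_smul]

/-- The class of finite cyclic groups has the amalgamation property: for embeddings
`f : ℤ_k → ℤ_m` and `g : ℤ_k → ℤ_n` there are embeddings `f' : ℤ_m → ℤ_{mn}`,
`g' : ℤ_n → ℤ_{mn}` and an automorphism `h` of `ℤ_{mn}` with `h ∘ f' ∘ f = g' ∘ g`. -/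
theorem finite_cyclic_amalgamation (k m n : ℕ) (hk : 0 < k) (hm : 0 < m) (hn : 0 < n)
    (f : ZMod k →+ ZMod m) (g : ZMod k →+ ZMod n)
    (hf : Function.Injective f) (hg : Function.Injective g) :
    ∃ (f' : ZMod m →+ ZMod (m * n)) (g' : ZMod n →+ ZMod (m * n))
      (h : ZMod (m * n) ≃+ ZMod (m * n)),
      Function.Injective f' ∧ Function.Injective g' ∧
      ∀ x : ZMod k, h (f' (f x)) = g' (g x) := by
  have hmn : m * n ≠ 0 := by positivity
  haveI : NeZero k := ⟨hk.ne'⟩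
  -- f' : 1 ↦ n,  g' : 1 ↦ m
  let f' : ZMod m →+ ZMod (m * n) :=
    ZMod.lift m ⟨zmultiplesHom _ ((n : ZMod (m * n))), by
      simp only [zmultiplesHom_apply]
      rw [natCast_zsmul, nsmul_eq_mul, ← Nat.cast_mul, ZMod.natCast_self]⟩
  let g' : ZMod n →+ ZMod (m * n) :=
    ZMod.lift n ⟨zmultiplesHom _ ((m : ZMod (m * n))), by
      simp only [zmultiplesHom_apply]
      rw [natCast_zsmul, nsmul_eq_mul, ← Nat.cast_mul, mul_comm n m, ZMod.natCast_self]⟩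
  have hf'1 : f' 1 = (n : ZMod (m * n)) := by
    have h1 : (1 : ZMod m) = ((1 : ℤ) : ZMod m) := by norm_cast
    simp only [f']
    rw [h1, ZMod.lift_coe]
    simp
  have hg'1 : g' 1 = (m : ZMod (m * n)) := by
    have h1 : (1 : ZMod n) = ((1 : ℤ) : ZMod n) := by norm_cast
    simp only [g']
    rw [h1, ZMod.lift_coe]
    simp
  have hf'ord : addOrderOf (f' 1) = m := by
    rw [hf'1, ZMod.addOrderOf_coe n hmn, Nat.gcd_eq_right ⟨m, mul_comm m n⟩,
      Nat.mul_div_left m hn]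
  have hg'ord : addOrderOf (g' 1) = n := by
    rw [hg'1, ZMod.addOrderOf_coe m hmn, Nat.gcd_eq_right ⟨n, rfl⟩,
      Nat.mul_div_cancel_left n hm]
  have hf' : Function.Injective f' := zmod_hom_injective hm f' hf'ord
  have hg' : Function.Injective g' := zmod_hom_injective hn g' hg'ord
  -- the two images of 1 have equal order k
  have horda : addOrderOf (f' (f 1)) = k := by
    rw [addOrderOf_injective f' hf', addOrderOf_injective f hf, ZMod.addOrderOf_one]
  have hordb : addOrderOf (g' (g 1)) = k := by
    rw [addOrderOf_injective g' hg', addOrderOf_injective g hg, ZMod.addOrderOf_one]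
  obtain ⟨u, hu⟩ := zmod_exists_unit_mul_eq hmn (f' (f 1)) (g' (g 1))
    (by rw [horda, hordb])
  refine ⟨f', g', AddAut.mulLeft u, hf', hg', fun x => ?_⟩
  have hx1 : x = x.val • (1 : ZMod k) := by
    rw [Nat.smul_one_eq_cast, ZMod.natCast_rightInverse x]
  have hgen : (AddAut.mulLeft u) (f' (f 1)) = g' (g 1) := by
    exact hu
  rw [hx1]
  simp only [map_nsmul]
  exact (map_nsmul (Multiplicative.toAdd (AddAut.mulLeft u)) x.val (f' (f 1))).trans
    (congrArg (x.val • ·) hgen)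
end
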